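/- Let m ≥ 1, let T be a non-self-overlapping m-bit template, and let B be drawn uniformly at random from the 2^M equiprobable M-bit blocks. For a position k with 0 ≤ k ≤ M−m, let I_k be the indicator that B(k+i) = T(i) for all i < m. Then for positions k, l with 0 ≤ k, l ≤ M−m: E[I_k I_l] = 1/2^m if k = l; E[I_k I_l] = 0 if 1 ≤ |k−l| ≤ m−1; and E[I_k I_l] = 1/2^{2m} if |k−l| ≥ m. -/

import Mathlib

open scoped Classical

/-- `T` occurs in the block `B` at position `k`: `B (k+i) = T i` for all `i < m`. -/
def occursAt {m M : ℕ} (T : Fin m → Bool) (B : Fin M → Bool) (k : ℕ) : Prop :=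
  ∀ i : Fin m, ∀ h : k + i.1 < M, B ⟨k + i.1, h⟩ = T i

/-- `T` is non-self-overlapping: for every `1 ≤ k ≤ m-1` the length-`(m-k)` prefix of `T`
differs from its length-`(m-k)` suffix. -/
def NonSelfOverlapping {m : ℕ} (T : Fin m → Bool) : Prop :=
  ∀ k : ℕ, 1 ≤ k → k ≤ m - 1 → ∃ i : ℕ, ∃ h : i < m - k,
    T ⟨i, by omega⟩ ≠ T ⟨i + k, by omega⟩

/-- Expectation of `f` when the block is drawn uniformly from the `2^M` `M`-bit blocks. -/
noncomputable def unifExp (M : ℕ) (f : (Fin M → Bool) → ℝ) : ℝ :=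
  (∑ B : Fin M → Bool, f B) / 2 ^ M

/-! Prescribing the bits of a uniform block on a set `S` of positions is an event of probability
`2^(-|S|)`. An occurrence of `T` at `k` prescribes the `m` bits of the window `[k, k + m)`; for
`|k - l| ≥ m` the two windows are disjoint, so both occurrences together prescribe `2m` bits. For
`d = |k - l|` with `1 ≤ d ≤ m - 1` the two occurrences would force `T i = T (i + d)` for all
`i < m - d`, which non-self-overlap rules out. -/

open Finset

theorem card_filter_forall_mem_eq {α β : Type*} [Fintype α] [DecidableEq α] [Fintype β]
    (S : Finset α) (f : α → β) [DecidablePred fun B : α → β => ∀ a ∈ S, B a = f a] :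
    #{B : α → β | ∀ a ∈ S, B a = f a} = Fintype.card β ^ (Fintype.card α - #S) := by
  have hpi : ({B : α → β | ∀ a ∈ S, B a = f a} : Finset (α → β)) =
      Fintype.piFinset fun a => if a ∈ S then {f a} else univ := by
    ext B
    simp only [mem_filter, mem_univ, true_and, Fintype.mem_piFinset]
    refine forall_congr' fun a => ?_
    split_ifs <;> simp [*]
  simp only [hpi, Fintype.card_piFinset, apply_ite card, card_singleton, prod_ite, prod_const_one,
    prod_const, one_mul, card_univ, filter_notMem_eq_sdiff, card_univ_sdiff]

theorem forall_mem_union_piecewise_iff {α β : Type*} [DecidableEq α] {S₁ S₂ : Finset α}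
    (h : Disjoint S₁ S₂) (f g B : α → β) :
    ((∀ a ∈ S₁, B a = f a) ∧ ∀ a ∈ S₂, B a = g a) ↔
      ∀ a ∈ S₁ ∪ S₂, B a = S₁.piecewise f g a := by
  rw [forall_mem_union]
  refine and_congr (forall₂_congr fun a ha => by rw [piecewise_eq_of_mem _ _ _ ha])
    (forall₂_congr fun a ha => by rw [piecewise_eq_of_notMem _ _ _ (disjoint_right.mp h ha)])

theorem unifExp_indicator_eq {M : ℕ} {P : (Fin M → Bool) → Prop} [DecidablePred P]
    (S : Finset (Fin M)) (f : Fin M → Bool) (hP : ∀ B, P B ↔ ∀ j ∈ S, B j = f j) :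
    unifExp M (fun B => if P B then 1 else 0) = 1 / 2 ^ #S := by
  have hS : #S ≤ M := by simpa using card_le_univ S
  simp only [unifExp, sum_boole, hP, card_filter_forall_mem_eq, Fintype.card_bool,
    Fintype.card_fin]
  rw [div_eq_div_iff (by positivity) (by positivity)]
  push_cast
  rw [one_mul, ← pow_add, Nat.sub_add_cancel hS]

def window (M m k : ℕ) : Finset (Fin M) := {j | k ≤ j.1 ∧ j.1 < k + m}

theorem card_window {M m k : ℕ} (h : k + m ≤ M) : #(window M m k) = m := by
  have hval : (window M m k).map Fin.valEmbedding = Ico k (k + m) := by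
    ext j
    simp only [window, mem_map, mem_filter, mem_univ, true_and, Fin.valEmbedding_apply, mem_Ico]
    exact ⟨by rintro ⟨a, ha, rfl⟩; exact ha, fun hj => ⟨⟨j, by omega⟩, hj, rfl⟩⟩
  rw [← card_map, hval, Nat.card_Ico, Nat.add_sub_cancel_left]

theorem disjoint_window {M m k l : ℕ} (h : m ≤ Nat.dist k l) :
    Disjoint (window M m k) (window M m l) := by
  simp only [disjoint_left, window, mem_filter, mem_univ, true_and, Nat.dist] at h ⊢
  omega

/-- `T` written on the window `[k, k + m)`; its values outside the window are never used. -/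
def placedAt {m : ℕ} (M : ℕ) (T : Fin m → Bool) (k : ℕ) (j : Fin M) : Bool :=
  if h : j.1 - k < m then T ⟨j.1 - k, h⟩ else false

theorem occursAt_iff_forall_mem_window {m M : ℕ} (T : Fin m → Bool) (B : Fin M → Bool)
    (k : ℕ) : occursAt T B k ↔ ∀ j ∈ window M m k, B j = placedAt M T k j := by
  simp only [window, mem_filter, mem_univ, true_and, placedAt]
  constructor
  · rintro H j ⟨hkj, hjm⟩
    rw [dif_pos (by omega), ← H ⟨j.1 - k, by omega⟩ (by dsimp only; omega)]
    congr 1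
    ext
    simp only
    omega
  · intro H i h
    rw [H ⟨k + i.1, h⟩ (by dsimp only; omega), dif_pos (by simp)]
    simp

theorem not_occursAt_and_occursAt_of_lt {m M k l : ℕ} {T : Fin m → Bool}
    (hT : NonSelfOverlapping T) (hk : k + m ≤ M) (hkl : k < l) (hlk : l - k ≤ m - 1)
    (B : Fin M → Bool) : ¬(occursAt T B k ∧ occursAt T B l) := by
  rintro ⟨Hk, Hl⟩
  obtain ⟨i, hi, hne⟩ := hT (l - k) (by omega) hlk
  refine hne ((Hl ⟨i, by omega⟩ (by dsimp only; omega)).symm.trans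
    (Eq.trans ?_ (Hk _ (by dsimp only; omega))))
  congr 1
  ext
  simp only
  omega

theorem not_occursAt_and_occursAt {m M k l : ℕ} {T : Fin m → Bool}
    (hT : NonSelfOverlapping T) (hk : k + m ≤ M) (hl : l + m ≤ M) (h₁ : 1 ≤ Nat.dist k l)
    (h₂ : Nat.dist k l ≤ m - 1) (B : Fin M → Bool) :
    ¬(occursAt T B k ∧ occursAt T B l) := by
  simp only [Nat.dist] at h₁ h₂
  rcases lt_or_gt_of_ne (show k ≠ l by omega) with hkl | hlk
  · exact not_occursAt_and_occursAt_of_lt hT hk hkl (by omega) B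
  · exact fun h => not_occursAt_and_occursAt_of_lt hT hl hlk (by omega) B h.symm

theorem expectation_indicator_products_general (m M k l : ℕ) (T : Fin m → Bool)
    (hT : NonSelfOverlapping T) (hk : k + m ≤ M) (hl : l + m ≤ M) :
    (k = l →
      unifExp M (fun B => (if occursAt T B k then (1:ℝ) else 0) *
        (if occursAt T B l then (1:ℝ) else 0)) = 1 / 2 ^ m) ∧
    (1 ≤ Nat.dist k l → Nat.dist k l ≤ m - 1 →
      unifExp M (fun B => (if occursAt T B k then (1:ℝ) else 0) *
        (if occursAt T B l then (1:ℝ) else 0)) = 0) ∧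
    (m ≤ Nat.dist k l →
      unifExp M (fun B => (if occursAt T B k then (1:ℝ) else 0) *
        (if occursAt T B l then (1:ℝ) else 0)) = 1 / 2 ^ (2 * m)) := by
  simp only [ite_zero_mul_ite_zero, mul_one]
  refine ⟨?_, fun h₁ h₂ => ?_, fun hd => ?_⟩
  · rintro rfl
    have h := unifExp_indicator_eq (window M m k) _ fun B =>
      and_self_iff.trans (occursAt_iff_forall_mem_window T B k)
    rwa [card_window hk] at h
  · simp [unifExp, not_occursAt_and_occursAt hT hk hl h₁ h₂]
  · have hcard : #(window M m k ∪ window M m l) = 2 * m := by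
      rw [card_union_of_disjoint (disjoint_window hd), card_window hk, card_window hl, two_mul]
    rw [← hcard]
    refine unifExp_indicator_eq _ ((window M m k).piecewise (placedAt M T k) (placedAt M T l))
      fun B => ?_
    rw [occursAt_iff_forall_mem_window, occursAt_iff_forall_mem_window,
      forall_mem_union_piecewise_iff (disjoint_window hd)]

theorem expectation_indicator_products (m M k l : ℕ) (hm : 1 ≤ m) (T : Fin m → Bool)
    (hT : NonSelfOverlapping T) (hk : k + m ≤ M) (hl : l + m ≤ M) :
    (k = l →
      unifExp M (fun B => (if occursAt T B k then (1:ℝ) else 0) *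
        (if occursAt T B l then (1:ℝ) else 0)) = 1 / 2 ^ m) ∧
    (1 ≤ Nat.dist k l → Nat.dist k l ≤ m - 1 →
      unifExp M (fun B => (if occursAt T B k then (1:ℝ) else 0) *
        (if occursAt T B l then (1:ℝ) else 0)) = 0) ∧
    (m ≤ Nat.dist k l →
      unifExp M (fun B => (if occursAt T B k then (1:ℝ) else 0) *
        (if occursAt T B l then (1:ℝ) else 0)) = 1 / 2 ^ (2 * m)) :=
  expectation_indicator_products_general m M k l T hT hk hl
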